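/- arXiv:2411.09594 — 4 statements merged into one kernel-verified Lean document; each statement's English description precedes it below -/
import Mathlib

section
/- Every periodic solution of system (S1) lies on a circle centered at the origin of radius 0 or 1: if x, y : ℝ → ℝ is a solution of (S1) and there exists T > 0 with x(t+T) = x(t) and y(t+T) = y(t) for all t, then the function x(t)² + y(t)² is constant, and its constant value is either 0 or 1. -/
/-!
The rotational part of (S1) does not change `r = x² + y²`, which satisfies the scalar equation
`r' = 2 r (r - 1)`. A periodic `r` attains its maximum and minimum, where `r'` vanishes, so both
lie in `{0, 1}`. The only nonconstant option is minimum `0` and maximum `1`; but then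
`0 ≤ r ≤ 1`, so `r' ≤ 0`, and an antitone periodic function is constant.
-/

open Function Set

theorem hasDerivAt_sq_add_sq_of_rotational {x y g : ℝ → ℝ} {t : ℝ}
    (hx : HasDerivAt x (-y t + x t * g t) t) (hy : HasDerivAt y (x t + y t * g t) t) :
    HasDerivAt (fun s => x s ^ 2 + y s ^ 2) (2 * (x t ^ 2 + y t ^ 2) * g t) t := by
  refine ((hx.fun_pow 2).add (hy.fun_pow 2)).congr_deriv ?_
  push_cast
  ring

namespace Function.Periodic

variable {β : Type*} {f : ℝ → β} {c : ℝ}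

theorem exists_isMaxOn_univ [LinearOrder β] [TopologicalSpace β] [ClosedIciTopology β]
    (hf : Periodic f c) (hc : c ≠ 0) (hcont : Continuous f) : ∃ t, IsMaxOn f univ t := by
  obtain ⟨_, ⟨t, rfl⟩, hmax⟩ :=
    (hf.compact_of_continuous hc hcont).exists_isGreatest (range_nonempty f)
  exact ⟨t, fun s _ => hmax ⟨s, rfl⟩⟩

theorem exists_isMinOn_univ [LinearOrder β] [TopologicalSpace β] [ClosedIicTopology β]
    (hf : Periodic f c) (hc : c ≠ 0) (hcont : Continuous f) : ∃ t, IsMinOn f univ t :=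
  exists_isMaxOn_univ (β := βᵒᵈ) hf hc hcont

theorem apply_eq_of_antitone [PartialOrder β] (hf : Periodic f c) (hc : c ≠ 0)
    (hanti : Antitone f) (a b : ℝ) : f a = f b := by
  wlog hpos : 0 < c generalizing c
  · exact this hf.neg (neg_ne_zero.mpr hc) (neg_pos.mpr (hc.lt_of_le (not_lt.mp hpos)))
  have hle : ∀ a b, f b ≤ f a := fun a b => by
    obtain ⟨n, hn⟩ := exists_nat_ge ((a - b) / c)
    have hab : a ≤ b + n * c := by
      rw [div_le_iff₀ hpos] at hn
      linarith
    calc f b = f (b + n * c) := (hf.nat_mul n b).symm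
      _ ≤ f a := hanti hab
  exact le_antisymm (hle b a) (hle a b)

end Function.Periodic

/-- Every periodic solution of system (S1) lies on a circle centered at the
origin of radius `0` or `1`. -/
theorem periodic_solutions_S1 (x y : ℝ → ℝ)
    (hx : ∀ t : ℝ, HasDerivAt x (-y t + x t * ((x t) ^ 2 + (y t) ^ 2 - 1)) t)
    (hy : ∀ t : ℝ, HasDerivAt y (x t + y t * ((x t) ^ 2 + (y t) ^ 2 - 1)) t)
    (T : ℝ) (hT : 0 < T)
    (hper : ∀ t : ℝ, x (t + T) = x t ∧ y (t + T) = y t) :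
    ∃ c : ℝ, (∀ t : ℝ, (x t) ^ 2 + (y t) ^ 2 = c) ∧ (c = 0 ∨ c = 1) := by
  let r : ℝ → ℝ := fun t => x t ^ 2 + y t ^ 2
  have hr : ∀ t, HasDerivAt r (2 * r t * (r t - 1)) t := fun t =>
    hasDerivAt_sq_add_sq_of_rotational (g := fun s => r s - 1) (hx t) (hy t)
  have hrper : Periodic r T := fun t => by simp only [r, (hper t).1, (hper t).2]
  have hrcont : Continuous r := continuous_iff_continuousAt.2 fun t => (hr t).continuousAt
  have extr_eq_zero_or_one : ∀ t, IsLocalExtr r t → r t = 0 ∨ r t = 1 := fun t ht => by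
    rcases mul_eq_zero.1 (ht.hasDerivAt_eq_zero (hr t)) with h | h
    · exact .inl (by simpa using h)
    · exact .inr (by linarith)
  obtain ⟨tM, hM⟩ := hrper.exists_isMaxOn_univ hT.ne' hrcont
  obtain ⟨tm, hm⟩ := hrper.exists_isMinOn_univ hT.ne' hrcont
  have hM_val := extr_eq_zero_or_one tM (hM.isExtr.isLocalExtr Filter.univ_mem)
  suffices r tm = r tM from
    ⟨r tM, fun t => le_antisymm (hM (mem_univ t)) (this ▸ hm (mem_univ t)), hM_val⟩
  rcases extr_eq_zero_or_one tm (hm.isExtr.isLocalExtr Filter.univ_mem) with hm0 | hm1 <;>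
    rcases hM_val with hM0 | hM1
  · rw [hm0, hM0]
  · refine hrper.apply_eq_of_antitone hT.ne' (antitone_of_hasDerivAt_nonpos hr fun t => ?_) tm tM
    have h0 : 0 ≤ r t := hm0 ▸ hm (mem_univ t)
    have h1 : r t ≤ 1 := hM1 ▸ hM (mem_univ t)
    show 2 * r t * (r t - 1) ≤ 0
    nlinarith
  · have : r tm ≤ r tM := hm (mem_univ tM)
    linarith
  · rw [hm1, hM1]
end

section
/- Every periodic solution of system (S1a) lies on a circle centered at the origin of radius 0, 1, or 2: if x, y : ℝ → ℝ is a solution of (S1a) and there exists T > 0 with x(t+T) = x(t) and y(t+T) = y(t) for all t, then the function x(t)² + y(t)² is constant, and its constant value is 0, 1, or 4. -/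
/-!
Along a solution the squared radius `r = x² + y²` solves the scalar autonomous equation
`r' = f(r)` with `f(u) = 2u(u - 1)(u - 4)`. For an antiderivative `F` of `f`, the composite
`F ∘ r` has derivative `f(r)² ≥ 0`, so it is monotone; being also periodic it is constant.
Hence `f(r) = r'` vanishes identically: `r` is constant, equal to a zero of `f`.
-/

open Function

theorem Function.Periodic.eq_of_monotone {g : ℝ → ℝ} {T : ℝ} (hp : Periodic g T)
    (hg : Monotone g) (hT : 0 < T) (s t : ℝ) : g s = g t := by
  wlog hst : s ≤ t generalizing s t
  · exact (this t s (le_of_not_ge hst)).symm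
  obtain ⟨n, hn⟩ := exists_nat_ge ((t - s) / T)
  have ht : t ≤ s + n * T := by
    rw [div_le_iff₀ hT] at hn
    linarith
  refine le_antisymm (hg hst) ?_
  calc g t ≤ g (s + n * T) := hg ht
    _ = g s := hp.nat_mul n s

theorem Function.Periodic.apply_eq_zero_of_hasDerivAt {f r : ℝ → ℝ} {T : ℝ}
    (hper : Periodic r T) (hT : 0 < T) (hf : Continuous f)
    (hr : ∀ t, HasDerivAt r (f (r t)) t) (t : ℝ) : f (r t) = 0 := by
  set F : ℝ → ℝ := fun u => ∫ v in (0 : ℝ)..u, f v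
  have hG : ∀ s, HasDerivAt (F ∘ r) (f (r s) * f (r s)) s := fun s =>
    (hf.integral_hasStrictDerivAt 0 (r s)).hasDerivAt.comp s (hr s)
  have hconst : ∀ s, (F ∘ r) s = (F ∘ r) t :=
    fun s => (hper.comp F).eq_of_monotone
      (monotone_of_hasDerivAt_nonneg hG fun s => mul_self_nonneg _) hT s t
  have hG₀ : HasDerivAt (F ∘ r) 0 t :=
    (hasDerivAt_const t ((F ∘ r) t)).congr_of_eventuallyEq (Filter.Eventually.of_forall hconst)
  exact mul_self_eq_zero.1 ((hG t).unique hG₀)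

theorem Function.Periodic.exists_eq_const_of_hasDerivAt {f r : ℝ → ℝ} {T : ℝ}
    (hper : Periodic r T) (hT : 0 < T) (hf : Continuous f)
    (hr : ∀ t, HasDerivAt r (f (r t)) t) : ∃ c, f c = 0 ∧ ∀ t, r t = c := by
  refine ⟨r 0, hper.apply_eq_zero_of_hasDerivAt hT hf hr 0, fun t => ?_⟩
  refine is_const_of_deriv_eq_zero (fun s => (hr s).differentiableAt) (fun s => ?_) t 0
  rw [(hr s).deriv, hper.apply_eq_zero_of_hasDerivAt hT hf hr s]

/-- Every periodic solution of system (S1a) lies on a circle centered at the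
origin of radius `0`, `1`, or `2`. -/
theorem periodic_solutions_S1a (x y : ℝ → ℝ)
    (hx : ∀ t : ℝ, HasDerivAt x
      (-y t + x t * ((x t) ^ 2 + (y t) ^ 2 - 1) * ((x t) ^ 2 + (y t) ^ 2 - 4)) t)
    (hy : ∀ t : ℝ, HasDerivAt y
      (x t + y t * ((x t) ^ 2 + (y t) ^ 2 - 1) * ((x t) ^ 2 + (y t) ^ 2 - 4)) t)
    (T : ℝ) (hT : 0 < T)
    (hper : ∀ t : ℝ, x (t + T) = x t ∧ y (t + T) = y t) :
    ∃ c : ℝ, (∀ t : ℝ, (x t) ^ 2 + (y t) ^ 2 = c) ∧ (c = 0 ∨ c = 1 ∨ c = 4) := by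
  set r : ℝ → ℝ := fun t => (x t) ^ 2 + (y t) ^ 2
  set f : ℝ → ℝ := fun u => 2 * u * (u - 1) * (u - 4)
  have hr : ∀ t, HasDerivAt r (f (r t)) t := fun t =>
    (((hx t).pow 2).add ((hy t).pow 2)).congr_deriv (by simp only [r, f]; ring)
  have hrper : Periodic r T := fun t => by simp only [r, (hper t).1, (hper t).2]
  obtain ⟨c, hfc, hrc⟩ := hrper.exists_eq_const_of_hasDerivAt hT (by fun_prop) hr
  refine ⟨c, hrc, ?_⟩
  simpa [f, sub_eq_zero, or_assoc] using hfc
end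

section
/- The function H(x,y) = (x² + y²)/(1 + y)² is a first integral of system (C): if x, y : ℝ → ℝ is a solution of (C) with 1 + y(t) ≠ 0 for all t ∈ ℝ, then the function t ↦ (x(t)² + y(t)²)/(1 + y(t))² is constant on ℝ. -/
/-!
Along a solution of (C) both the numerator `x² + y²` and the denominator `(1 + y)²` of `H`
satisfy the same scalar linear equation `ḟ = 2x f`, so their quotient has zero derivative
wherever the denominator does not vanish.
-/

theorem hasDerivAt_div_eq_zero_of_same_rate {f g a : ℝ → ℝ} {t : ℝ}
    (hf : HasDerivAt f (a t * f t) t) (hg : HasDerivAt g (a t * g t) t) (hg0 : g t ≠ 0) :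
    HasDerivAt (fun s => f s / g s) 0 t :=
  (hf.fun_div hg hg0).congr_deriv (by ring)

theorem div_eq_div_of_same_rate {f g a : ℝ → ℝ}
    (hf : ∀ t, HasDerivAt f (a t * f t) t) (hg : ∀ t, HasDerivAt g (a t * g t) t)
    (hg0 : ∀ t, g t ≠ 0) (t s : ℝ) :
    f t / g t = f s / g s := by
  have hderiv : ∀ u, HasDerivAt (fun u => f u / g u) 0 u := fun u =>
    hasDerivAt_div_eq_zero_of_same_rate (hf u) (hg u) (hg0 u)
  exact is_const_of_deriv_eq_zero (fun u => (hderiv u).differentiableAt)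
    (fun u => (hderiv u).deriv) t s

section SystemC

variable {x y : ℝ → ℝ}

theorem hasDerivAt_sq_add_sq_of_solution_C
    (hx : ∀ t, HasDerivAt x (-y t + x t ^ 2) t) (hy : ∀ t, HasDerivAt y (x t + x t * y t) t)
    (t : ℝ) :
    HasDerivAt (fun s => x s ^ 2 + y s ^ 2) (2 * x t * (x t ^ 2 + y t ^ 2)) t :=
  (((hx t).fun_pow 2).add ((hy t).fun_pow 2)).congr_deriv (by ring)

theorem hasDerivAt_one_add_sq_of_solution_C
    (hy : ∀ t, HasDerivAt y (x t + x t * y t) t) (t : ℝ) :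
    HasDerivAt (fun s => (1 + y s) ^ 2) (2 * x t * (1 + y t) ^ 2) t :=
  (((hy t).const_add 1).fun_pow 2).congr_deriv (by ring)

end SystemC

/-- `H(x,y) = (x² + y²)/(1 + y)²` is a first integral of system (C):
along any solution of `ẋ = −y + x²`, `ẏ = x + xy` with `1 + y(t) ≠ 0`,
the function `t ↦ (x(t)² + y(t)²)/(1 + y(t))²` is constant. -/
theorem first_integral_C (x y : ℝ → ℝ)
    (hx : ∀ t : ℝ, HasDerivAt x (-y t + (x t) ^ 2) t)
    (hy : ∀ t : ℝ, HasDerivAt y (x t + x t * y t) t)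
    (hden : ∀ t : ℝ, 1 + y t ≠ 0) :
    ∀ t s : ℝ, ((x t) ^ 2 + (y t) ^ 2) / (1 + y t) ^ 2 =
      ((x s) ^ 2 + (y s) ^ 2) / (1 + y s) ^ 2 :=
  div_eq_div_of_same_rate (a := fun t => 2 * x t)
    (hasDerivAt_sq_add_sq_of_solution_C hx hy) (hasDerivAt_one_add_sq_of_solution_C hy)
    (fun t => pow_ne_zero 2 (hden t))
end

section
/- For every natural number k ≥ 35, the inequality 4^(k−1)·(k − 13/6) + 2^k − 1/3 > 4·(2^k − 2)·(2^(k+1) − 5) holds (as an inequality of real numbers). Consequently, the Christopher–Lloyd lower bound S_k for the number of limit cycles of the degree-(2^k − 1) system PH_k exceeds the value 2(n−1)(4(n−1)−2) claimed in the disputed paper for n = 2^k − 1. -/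
/-- For every natural number `k ≥ 35`, the Christopher–Lloyd lower bound
`S_k = 4^(k−1)(k − 13/6) + 2^k − 1/3` for the number of limit cycles of the
degree-`(2^k − 1)` system `PH_k` exceeds the value `2(n−1)(4(n−1)−2)`
claimed in the disputed paper for `n = 2^k − 1`, i.e.
`4(2^k − 2)(2^(k+1) − 5)`. -/
theorem christopher_lloyd_counterexample (k : ℕ) (hk : 35 ≤ k) :
    (4 : ℝ) ^ (k - 1) * ((k : ℝ) - 13 / 6) + 2 ^ k - 1 / 3 >
      4 * ((2 : ℝ) ^ k - 2) * ((2 : ℝ) ^ (k + 1) - 5) := by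
  obtain ⟨m, rfl⟩ : ∃ m, k = m + 1 := ⟨k - 1, by omega⟩
  have hm : (34 : ℝ) ≤ (m : ℝ) := by exact_mod_cast Nat.le_of_succ_le_succ hk
  set a : ℝ := 2 ^ m with ha
  have ha1 : (1 : ℝ) ≤ a := one_le_pow₀ (by norm_num)
  have h4 : (4 : ℝ) ^ (m + 1 - 1) = a ^ 2 := by
    simp [ha, ← pow_mul, show (4:ℝ) = 2^2 by norm_num, mul_comm]
  have h2 : (2 : ℝ) ^ (m + 1) = 2 * a := by rw [pow_succ]; ring
  have h2' : (2 : ℝ) ^ (m + 1 + 1) = 4 * a := by rw [pow_succ, h2]; ring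
  rw [h4, h2, h2']
  push_cast
  nlinarith [sq_nonneg a, mul_le_mul_of_nonneg_left hm (sq_nonneg a)]
end
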